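/- Let J(φ) = ∫(|∇φ|^2/2 + |φ|^2/2 − |φ|^4/4) dx and K_0(φ) = ∫(|∇φ|^2 + |φ|^2 − |φ|^4) dx on H^1(ℝ^3). Then inf{J(φ) : φ ∈ H^1, φ ≠ 0, K_0(φ) = 0} = inf{(1/4)‖φ‖_{H^1}^2 : φ ∈ H^1, φ ≠ 0, K_0(φ) ≤ 0}. -/

import Mathlib

open MeasureTheory

/-!
On the constraint `K₀(φ) = 0` the quartic term `∫ |φ|⁴` equals `‖φ‖²_{H¹}`, so `J(φ) = ‖φ‖²_{H¹} / 4`;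
hence every value of the first set is a value of the second. Conversely, if `φ ≠ 0` and
`K₀(φ) ≤ 0`, then `K₀(λφ) = λ²‖φ‖²_{H¹} - λ⁴‖φ‖⁴_{L⁴}` vanishes for
`λ² = ‖φ‖²_{H¹} / ‖φ‖⁴_{L⁴} ∈ (0, 1]`, and `J(λφ) = λ²‖φ‖²_{H¹} / 4 ≤ ‖φ‖²_{H¹} / 4`.
-/

/-- Membership in H¹(ℝ³), together with the L⁴ integrability used in the functionals. -/
def IsH1 (φ : EuclideanSpace ℝ (Fin 3) → ℝ) : Prop :=
  Differentiable ℝ φ ∧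
    Integrable (fun x => |φ x| ^ 2) (volume : Measure (EuclideanSpace ℝ (Fin 3))) ∧
    Integrable (fun x => ‖gradient φ x‖ ^ 2) (volume : Measure (EuclideanSpace ℝ (Fin 3))) ∧
    Integrable (fun x => |φ x| ^ 4) (volume : Measure (EuclideanSpace ℝ (Fin 3)))

/-- Static energy J(φ) = ∫(|∇φ|²/2 + |φ|²/2 − |φ|⁴/4) dx. -/
noncomputable def Jfun (φ : EuclideanSpace ℝ (Fin 3) → ℝ) : ℝ :=
  ∫ x, (‖gradient φ x‖ ^ 2 / 2 + |φ x| ^ 2 / 2 - |φ x| ^ 4 / 4)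

/-- K₀(φ) = ∫(|∇φ|² + |φ|² − |φ|⁴) dx. -/
noncomputable def K0 (φ : EuclideanSpace ℝ (Fin 3) → ℝ) : ℝ :=
  ∫ x, (‖gradient φ x‖ ^ 2 + |φ x| ^ 2 - |φ x| ^ 4)

theorem gradient_const_mul {E : Type*} [NormedAddCommGroup E] [InnerProductSpace ℝ E]
    [CompleteSpace E] {f : E → ℝ} {x : E} (hf : DifferentiableAt ℝ f x) (c : ℝ) :
    gradient (fun y => c * f y) x = c • gradient f x := by
  simp only [gradient, fderiv_const_mul hf, map_smul]

theorem integral_abs_const_mul_pow {α : Type*} [MeasurableSpace α] {μ : Measure α}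
    (f : α → ℝ) (c : ℝ) (n : ℕ) :
    ∫ x, |c * f x| ^ n ∂μ = |c| ^ n * ∫ x, |f x| ^ n ∂μ := by
  simp only [abs_mul, mul_pow, integral_const_mul]

noncomputable def h1NormSq (φ : EuclideanSpace ℝ (Fin 3) → ℝ) : ℝ :=
  (∫ x, ‖gradient φ x‖ ^ 2) + ∫ x, |φ x| ^ 2

theorem h1NormSq_const_mul {φ : EuclideanSpace ℝ (Fin 3) → ℝ} (hd : Differentiable ℝ φ)
    (c : ℝ) : h1NormSq (fun y => c * φ y) = c ^ 2 * h1NormSq φ := by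
  simp only [h1NormSq, gradient_const_mul (hd _), norm_smul, Real.norm_eq_abs, mul_pow,
    integral_const_mul, sq_abs]
  ring

namespace IsH1

variable {φ : EuclideanSpace ℝ (Fin 3) → ℝ}

theorem h1NormSq_pos (h : IsH1 φ) (hne : φ ≠ 0) : 0 < h1NormSq φ := by
  obtain ⟨x₀, hx₀⟩ := Function.ne_iff.mp hne
  have hL2 : 0 < ∫ x, |φ x| ^ 2 :=
    integral_pos_of_integrable_nonneg_nonzero (h.1.continuous.abs.pow 2) h.2.1
      (fun x => by positivity) (pow_ne_zero 2 (abs_ne_zero.mpr hx₀))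
  exact add_pos_of_nonneg_of_pos (integral_nonneg fun x => by positivity) hL2

theorem K0_eq (h : IsH1 φ) : K0 φ = h1NormSq φ - ∫ x, |φ x| ^ 4 := by
  obtain ⟨-, hp, hg, hq⟩ := h
  rw [K0, integral_sub (hg.fun_add hp) hq, integral_add hg hp, h1NormSq]

theorem Jfun_eq (h : IsH1 φ) : Jfun φ = h1NormSq φ / 2 - (∫ x, |φ x| ^ 4) / 4 := by
  obtain ⟨-, hp, hg, hq⟩ := h
  rw [Jfun, integral_sub ((hg.div_const 2).fun_add (hp.div_const 2)) (hq.div_const 4),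
    integral_add (hg.div_const 2) (hp.div_const 2), integral_div, integral_div, integral_div,
    h1NormSq]
  ring

theorem Jfun_eq_of_K0_eq_zero (h : IsH1 φ) (hK : K0 φ = 0) : Jfun φ = 1 / 4 * h1NormSq φ := by
  rw [h.K0_eq] at hK
  rw [h.Jfun_eq]
  linarith

theorem const_mul (h : IsH1 φ) (c : ℝ) : IsH1 (fun y => c * φ y) := by
  obtain ⟨hd, hp, hg, hq⟩ := h
  refine ⟨hd.const_mul c, ?_, ?_, ?_⟩
  · simpa only [abs_mul, mul_pow] using hp.const_mul (|c| ^ 2)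
  · simpa only [gradient_const_mul (hd _), norm_smul, mul_pow] using hg.const_mul (‖c‖ ^ 2)
  · simpa only [abs_mul, mul_pow] using hq.const_mul (|c| ^ 4)

theorem K0_const_mul (h : IsH1 φ) (c : ℝ) :
    K0 (fun y => c * φ y) = c ^ 2 * h1NormSq φ - c ^ 4 * ∫ x, |φ x| ^ 4 := by
  rw [(h.const_mul c).K0_eq, h1NormSq_const_mul h.1, integral_abs_const_mul_pow,
    Even.pow_abs ⟨2, rfl⟩]

theorem exists_K0_eq_zero_Jfun_le (h : IsH1 φ) (hne : φ ≠ 0) (hK : K0 φ ≤ 0) :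
    ∃ ψ, IsH1 ψ ∧ ψ ≠ 0 ∧ K0 ψ = 0 ∧ Jfun ψ ≤ 1 / 4 * h1NormSq φ := by
  set Q := ∫ x, |φ x| ^ 4
  have hS : 0 < h1NormSq φ := h.h1NormSq_pos hne
  have hSQ : h1NormSq φ ≤ Q := by rw [h.K0_eq] at hK; linarith
  have hQ : 0 < Q := hS.trans_le hSQ
  set t := h1NormSq φ / Q
  have ht : 0 < t := div_pos hS hQ
  have ht1 : t ≤ 1 := (div_le_one hQ).2 hSQ
  have htQ : t * Q = h1NormSq φ := div_mul_cancel₀ _ hQ.ne'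
  have hc2 : √t ^ 2 = t := Real.sq_sqrt ht.le
  have hK0 : K0 (fun y => √t * φ y) = 0 := by
    rw [h.K0_const_mul, hc2, show √t ^ 4 = t ^ 2 by rw [show 4 = 2 * 2 from rfl, pow_mul, hc2]]
    linear_combination (-t) * htQ
  refine ⟨_, h.const_mul √t, fun hψ => hne ?_, hK0, ?_⟩
  · exact funext fun x => (mul_eq_zero.mp (congrFun hψ x)).resolve_left (Real.sqrt_pos.2 ht).ne'
  · rw [(h.const_mul √t).Jfun_eq_of_K0_eq_zero hK0, h1NormSq_const_mul h.1, hc2]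
    gcongr
    exact mul_le_of_le_one_left hS.le ht1

end IsH1

/-- The two constrained infima coincide:
`inf{J(φ) : φ ≠ 0, K₀(φ) = 0} = inf{(1/4)‖φ‖²_{H¹} : φ ≠ 0, K₀(φ) ≤ 0}`. -/
theorem constrained_infima_equal :
    sInf {c : ℝ | ∃ φ : EuclideanSpace ℝ (Fin 3) → ℝ,
        IsH1 φ ∧ φ ≠ 0 ∧ K0 φ = 0 ∧ c = Jfun φ} =
    sInf {c : ℝ | ∃ φ : EuclideanSpace ℝ (Fin 3) → ℝ,
        IsH1 φ ∧ φ ≠ 0 ∧ K0 φ ≤ 0 ∧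
        c = (1 / 4) * ((∫ x, ‖gradient φ x‖ ^ 2) + ∫ x, |φ x| ^ 2)} := by
  refine csInf_eq_csInf_of_forall_exists_le ?_ ?_
  · rintro _ ⟨φ, hφ, hne, hK, rfl⟩
    exact ⟨_, ⟨φ, hφ, hne, hK.le, rfl⟩, (hφ.Jfun_eq_of_K0_eq_zero hK).ge⟩
  · rintro _ ⟨φ, hφ, hne, hK, rfl⟩
    obtain ⟨ψ, hψ, hψne, hψK, hψJ⟩ := hφ.exists_K0_eq_zero_Jfun_le hne hK
    exact ⟨_, ⟨ψ, hψ, hψne, hψK, rfl⟩, hψJ⟩
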